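/- (Claim 6, first part) Let k ≥ 2 and n ≥ 3 be integers, let 1 ≤ r ≤ n−2, and let A ⊆ [k]^n be a compressed set with B_{≥r+1} ⊆ A ⊆ B_{≥r} such that D = A ∩ B_r is nonempty. Let s = max{m(x) : x ∈ D}, where m(x) = max(x_1,…,x_n). Then d([s]^n ∩ B_r) ⊆ d(A), where [s]^n = {0,…,s−1}^n. -/

import Mathlib

open Finset
open scoped Classical

/-- `R_i(x)`: the set of coordinates of `x` equal to `i`.
The ambient alphabet is `[k+1] = {0,…,k}`. -/
noncomputable def rset {k N : ℕ} (x : Fin N → Fin (k + 1)) (i : ℕ) : Finset (Fin N) :=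
  Finset.univ.filter fun j => (x j : ℕ) = i

/-- the strict binary order on finite sets of coordinates:
`X <_bin Y` iff `X ≠ Y` and `max (X Δ Y) ∈ Y`. -/
def binLT {N : ℕ} (X Y : Finset (Fin N)) : Prop :=
  ∃ m ∈ Y, m ∉ X ∧ ∀ j : Fin N, ((j ∈ X ∧ j ∉ Y) ∨ (j ∈ Y ∧ j ∉ X)) → j ≤ m

/-- the strict `≤`-order on `[k+1]^N`: `x < y` iff `|R_0(x)| > |R_0(y)|`, or
`|R_0(x)| = |R_0(y)|` and for the largest `i` with `R_i(x) ≠ R_i(y)` we have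
`max (R_i(x) Δ R_i(y)) ∈ R_i(y)`. -/
def plt {k N : ℕ} (x y : Fin N → Fin (k + 1)) : Prop :=
  (rset y 0).card < (rset x 0).card ∨
    ((rset x 0).card = (rset y 0).card ∧
      ∃ i : ℕ, binLT (rset x i) (rset y i) ∧ ∀ j : ℕ, i < j → rset x j = rset y j)

/-- the `≤`-order on `[k+1]^N`. -/
def ple {k N : ℕ} (x y : Fin N → Fin (k + 1)) : Prop := x = y ∨ plt x y

/-- `B` is an initial segment of the `≤`-order. -/
def isInitSeg {k N : ℕ} (B : Finset (Fin N → Fin (k + 1))) : Prop :=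
  ∀ y ∈ B, ∀ x, ple x y → x ∈ B

/-- the `d`-shadow: all points obtained from a point of `A` by flipping one
nonzero coordinate to `0`. -/
noncomputable def dShadow {k N : ℕ} (A : Finset (Fin N → Fin (k + 1))) :
    Finset (Fin N → Fin (k + 1)) :=
  A.biUnion fun x =>
    (Finset.univ.filter fun i => x i ≠ 0).image fun i => Function.update x i 0

/-- the initial segment of the `≤`-order on `[k+1]^N` of cardinality `m`. -/
noncomputable def initSeg (k N m : ℕ) : Finset (Fin N → Fin (k + 1)) :=
  Finset.univ.filter fun x => (Finset.univ.filter fun y => ple y x).card ≤ m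

/-- the `C_s`-compression of `A ⊆ [k+1]^(n+1)`: replace each slice
`A_{s,t} = {y : t_s y ∈ A}` by the initial segment of the same size. -/
noncomputable def compress {k n : ℕ} (s : Fin (n + 1)) (A : Finset (Fin (n + 1) → Fin (k + 1))) :
    Finset (Fin (n + 1) → Fin (k + 1)) :=
  Finset.univ.biUnion fun t : Fin (k + 1) =>
    (initSeg k n
        (Finset.univ.filter fun y : Fin n → Fin (k + 1) => s.insertNth t y ∈ A).card).image
      fun y => s.insertNth t y

/-- `A` is compressed if every `C_s`-compression fixes it. -/
def IsCompressed {k n : ℕ} (A : Finset (Fin (n + 1) → Fin (k + 1))) : Prop :=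
  ∀ s : Fin (n + 1), compress s A = A

/-- `B_r`: points with exactly `r` zero coordinates. -/
noncomputable def Bexact (k N r : ℕ) : Finset (Fin N → Fin (k + 1)) :=
  Finset.univ.filter fun x => (rset x 0).card = r

/-- `B_{≥r}`: points with at least `r` zero coordinates. -/
noncomputable def Bge (k N r : ℕ) : Finset (Fin N → Fin (k + 1)) :=
  Finset.univ.filter fun x => r ≤ (rset x 0).card

/-- `m(x)`: the largest coordinate value of `x`. -/
noncomputable def mval {k N : ℕ} (x : Fin N → Fin (k + 1)) : ℕ :=
  Finset.univ.sup fun i => (x i : ℕ)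

/-- the class `C_X`: points with maximal coordinate `s`, attained exactly on `X`,
and exactly `r` zero coordinates. -/
noncomputable def classSet (k N s r : ℕ) (X : Finset (Fin N)) : Finset (Fin N → Fin (k + 1)) :=
  Finset.univ.filter fun x => mval x = s ∧ rset x s = X ∧ (rset x 0).card = r

/-- `[m]^N = {0,…,m−1}^N`. -/
noncomputable def box (k N m : ℕ) : Finset (Fin N → Fin (k + 1)) :=
  Finset.univ.filter fun x => ∀ i, (x i : ℕ) < m

/-- `{1,…,s−1}^N`. -/
noncomputable def box1 (k N s : ℕ) : Finset (Fin N → Fin (k + 1)) :=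
  Finset.univ.filter fun x => ∀ i, 1 ≤ (x i : ℕ) ∧ (x i : ℕ) ≤ s - 1

/-- `B` is a down-set. -/
def isDownSet {k N : ℕ} (B : Finset (Fin N → Fin (k + 1))) : Prop :=
  ∀ y ∈ B, ∀ x : Fin N → Fin (k + 1), (∀ j, (x j : ℕ) ≤ (y j : ℕ)) → x ∈ B

/-!
Let `p ∈ A ∩ B_r` attain the maximum value `s` at the coordinate `a`. Compressing at `a`, the
point `P` that keeps `s` at `a` and replaces every other nonzero entry of `p` by `1` lies in `A`,
since the slice of `P` is `≤` that of `p`. Now let `w` arise from `x ∈ [s]^n ∩ B_r` by zeroing one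
coordinate, so `w` has `r + 1 ≥ 2` zeros. Choose a zero `c ≠ a` of `w`. If `P c = 1`, raise `w c`
to `1`; if `P c = 0`, raise another zero of `w` to `1`. The resulting `y` agrees with `P` at `c`,
has `r` zeros and all entries below `s`, so after deleting `c` it precedes `P` already at level
`s`; compressing at `c` gives `y ∈ A`, and `w ∈ d({y})`.
-/

open Finset.Colex in
lemma binLT_iff_toColex_lt {N : ℕ} {X Y : Finset (Fin N)} :
    binLT X Y ↔ toColex X < toColex Y := by
  rw [toColex_lt_toColex_iff_exists_forall_lt]
  constructor
  · rintro ⟨m, hmY, hmX, hmax⟩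
    exact ⟨m, hmY, hmX, fun b hbX hbY =>
      (hmax b (Or.inl ⟨hbX, hbY⟩)).lt_of_ne (ne_of_mem_of_not_mem hbX hmX)⟩
  · rintro ⟨a, haY, haX, hlt⟩
    have ha : a ∈ Y \ X := mem_sdiff.2 ⟨haY, haX⟩
    obtain ⟨hmY, hmX⟩ := mem_sdiff.1 ((Y \ X).max'_mem ⟨a, ha⟩)
    refine ⟨_, hmY, hmX, fun j hj => ?_⟩
    rcases hj with ⟨hjX, hjY⟩ | ⟨hjY, hjX⟩
    · exact (hlt j hjX hjY).le.trans ((Y \ X).le_max' a ha)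
    · exact (Y \ X).le_max' j (mem_sdiff.2 ⟨hjY, hjX⟩)

section Rset

variable {k N : ℕ}

lemma mem_rset {x : Fin N → Fin (k + 1)} {v : ℕ} {j : Fin N} :
    j ∈ rset x v ↔ (x j : ℕ) = v := by
  simp [rset]

lemma rset_eq_empty_iff {x : Fin N → Fin (k + 1)} {v : ℕ} :
    rset x v = ∅ ↔ ∀ j, (x j : ℕ) ≠ v := by
  simp [rset, filter_eq_empty_iff]

lemma rset_eq_empty_of_lt (x : Fin N → Fin (k + 1)) {v : ℕ} (hv : k < v) : rset x v = ∅ :=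
  rset_eq_empty_iff.2 fun j => by have := (x j).isLt; omega

lemma eq_of_forall_rset_eq {x y : Fin N → Fin (k + 1)}
    (h : ∀ i : Fin (k + 1), rset x i = rset y i) : x = y := by
  funext j
  have hj : j ∈ rset y (x j) := h (x j) ▸ mem_rset.2 rfl
  exact Fin.ext (mem_rset.1 hj).symm

lemma rset_update_of_eq {x : Fin N → Fin (k + 1)} {i : Fin N} {b : Fin (k + 1)} {v : ℕ}
    (hb : (b : ℕ) = v) : rset (Function.update x i b) v = insert i (rset x v) := by
  ext j
  by_cases hji : j = i <;> simp [mem_rset, hji, hb]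

lemma rset_update_of_ne {x : Fin N → Fin (k + 1)} {i : Fin N} {b : Fin (k + 1)} {v : ℕ}
    (hb : (b : ℕ) ≠ v) : rset (Function.update x i b) v = (rset x v).erase i := by
  ext j
  by_cases hji : j = i <;> simp [mem_rset, hji, hb]

lemma image_succAbove_rset_removeNth {n : ℕ} (c : Fin (n + 1)) (x : Fin (n + 1) → Fin (k + 1))
    (v : ℕ) : (rset (c.removeNth x) v).image c.succAbove = (rset x v).erase c := by
  ext j
  simp only [mem_image, mem_erase, mem_rset, Fin.removeNth_apply]
  constructor
  · rintro ⟨j, hj, rfl⟩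
    exact ⟨Fin.succAbove_ne c j, hj⟩
  · rintro ⟨hjc, hj⟩
    obtain ⟨j, rfl⟩ := Fin.exists_succAbove_eq hjc
    exact ⟨j, hj, rfl⟩

lemma card_rset_removeNth_eq {n : ℕ} {c : Fin (n + 1)} {x y : Fin (n + 1) → Fin (k + 1)}
    {v : ℕ} (hc : x c = y c) (h : #(rset x v) = #(rset y v)) :
    #(rset (c.removeNth x) v) = #(rset (c.removeNth y) v) := by
  rw [← card_image_of_injective _ (Fin.succAbove_right_injective (p := c)),
    ← card_image_of_injective _ (Fin.succAbove_right_injective (p := c)),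
    image_succAbove_rset_removeNth, image_succAbove_rset_removeNth]
  by_cases hxc : c ∈ rset x v
  · have hyc : c ∈ rset y v := by rw [mem_rset, ← hc]; exact mem_rset.1 hxc
    rw [card_erase_of_mem hxc, card_erase_of_mem hyc, h]
  · have hyc : c ∉ rset y v := by rwa [mem_rset, ← hc, ← mem_rset]
    rw [erase_eq_of_notMem hxc, erase_eq_of_notMem hyc, h]

end Rset

section Order

variable {k N : ℕ}

/-- `plt` is the pullback of a lexicographic order: fewer zeros is larger, and on ties the
tuples `(R_0(x), …, R_k(x))` of colex-ordered sets are compared from the last index down. -/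
noncomputable def lexKey (x : Fin N → Fin (k + 1)) :
    ℕᵒᵈ ×ₗ Colex (Fin (k + 1) → Colex (Finset (Fin N))) :=
  toLex (OrderDual.toDual #(rset x 0), toColex fun i => toColex (rset x i))

lemma plt_iff_lexKey_lt {x y : Fin N → Fin (k + 1)} : plt x y ↔ lexKey x < lexKey y := by
  rw [lexKey, lexKey, Prod.Lex.toLex_lt_toLex, OrderDual.toDual_lt_toDual, plt,
    OrderDual.toDual_inj]
  refine or_congr Iff.rfl (and_congr Iff.rfl ?_)
  change _ ↔ ∃ i : Fin (k + 1), (∀ j, i < j → toColex (rset x j) = toColex (rset y j)) ∧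
    toColex (rset x i) < toColex (rset y i)
  constructor
  · rintro ⟨i, hbin, habove⟩
    have hik : i < k + 1 := by
      by_contra hik
      obtain ⟨m, hm, -⟩ := hbin
      simp [rset_eq_empty_of_lt y (show k < i by omega)] at hm
    exact ⟨⟨i, hik⟩, fun j hj => congrArg toColex (habove j hj), binLT_iff_toColex_lt.1 hbin⟩
  · rintro ⟨i, habove, hlt⟩
    refine ⟨i, binLT_iff_toColex_lt.2 hlt, fun j hj => ?_⟩
    by_cases hjk : j ≤ k
    · exact toColex_inj.1 (habove ⟨j, by omega⟩ hj)
    · rw [rset_eq_empty_of_lt x (by omega), rset_eq_empty_of_lt y (by omega)]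

lemma lexKey_injective : Function.Injective (lexKey : (Fin N → Fin (k + 1)) → _) := by
  intro x y h
  refine eq_of_forall_rset_eq fun i => ?_
  exact toColex_inj.1 (congrArg (fun p => (ofLex p).2 i) h)

lemma ple_iff_lexKey_le {x y : Fin N → Fin (k + 1)} : ple x y ↔ lexKey x ≤ lexKey y := by
  rw [ple, plt_iff_lexKey_lt, le_iff_eq_or_lt, lexKey_injective.eq_iff]

lemma ple_trans {x y z : Fin N → Fin (k + 1)} (hxy : ple x y) (hyz : ple y z) : ple x z :=
  ple_iff_lexKey_le.2 ((ple_iff_lexKey_le.1 hxy).trans (ple_iff_lexKey_le.1 hyz))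

lemma mem_initSeg_of_ple {m : ℕ} {x y : Fin N → Fin (k + 1)} (hy : y ∈ initSeg k N m)
    (h : ple x y) : x ∈ initSeg k N m := by
  simp only [initSeg, mem_filter, mem_univ, true_and] at hy ⊢
  refine (card_le_card fun z hz => ?_).trans hy
  simp only [mem_filter, mem_univ, true_and] at hz ⊢
  exact ple_trans hz h

lemma plt_of_forall_lt {x y : Fin N → Fin (k + 1)} {s : ℕ} (hcard : #(rset x 0) = #(rset y 0))
    (hx : ∀ j, (x j : ℕ) < s) (hy : ∀ j, (y j : ℕ) ≤ s) {a : Fin N} (ha : (y a : ℕ) = s) :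
    plt x y := by
  have hxs : ∀ v, s ≤ v → rset x v = ∅ := fun v hv =>
    rset_eq_empty_iff.2 fun j => (hx j).trans_le hv |>.ne
  have hys : ∀ v, s < v → rset y v = ∅ := fun v hv =>
    rset_eq_empty_iff.2 fun j => (hy j).trans_lt hv |>.ne
  refine Or.inr ⟨hcard, s, binLT_iff_toColex_lt.2 ?_, fun v hv => by rw [hxs v hv.le, hys v hv]⟩
  rw [hxs s le_rfl]
  exact Finset.Colex.toColex_lt_toColex_of_ssubset (empty_ssubset.2 ⟨a, mem_rset.2 ha⟩)

end Order

section Compression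

variable {k n : ℕ} {A : Finset (Fin (n + 1) → Fin (k + 1))}

lemma mem_of_isCompressed (hA : IsCompressed A) {P Y : Fin (n + 1) → Fin (k + 1)} (hP : P ∈ A)
    (c : Fin (n + 1)) (hc : Y c = P c) (hle : ple (c.removeNth Y) (c.removeNth P)) : Y ∈ A := by
  rw [← hA c] at hP ⊢
  simp only [compress, mem_biUnion, mem_univ, true_and, mem_image] at hP ⊢
  obtain ⟨t, z, hz, rfl⟩ := hP
  refine ⟨t, c.removeNth Y, ?_, ?_⟩
  · rw [Fin.removeNth_insertNth] at hle
    exact mem_initSeg_of_ple hz hle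
  · rw [Fin.insertNth_apply_same] at hc
    rw [← hc]
    exact Fin.insertNth_self_removeNth c Y

lemma mem_of_isCompressed_of_forall_lt (hA : IsCompressed A) {P Y : Fin (n + 1) → Fin (k + 1)}
    (hP : P ∈ A) {c : Fin (n + 1)} (hc : Y c = P c) (hcard : #(rset Y 0) = #(rset P 0))
    {s : ℕ} (hY : ∀ j, (Y j : ℕ) < s) (hPs : ∀ j, (P j : ℕ) ≤ s) {a : Fin (n + 1)} (hac : a ≠ c)
    (ha : (P a : ℕ) = s) : Y ∈ A := by
  obtain ⟨a, rfl⟩ := Fin.exists_succAbove_eq hac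
  exact mem_of_isCompressed hA hP c hc <| Or.inr <|
    plt_of_forall_lt (card_rset_removeNth_eq hc hcard) (fun j => hY _) (fun j => hPs _) ha

end Compression

section Peak

variable {k N : ℕ}

lemma val_le_mval (x : Fin N → Fin (k + 1)) (j : Fin N) : (x j : ℕ) ≤ mval x :=
  le_sup (f := fun j => (x j : ℕ)) (mem_univ j)

lemma exists_val_eq_mval [Nonempty (Fin N)] (x : Fin N → Fin (k + 1)) :
    ∃ a, (x a : ℕ) = mval x := by
  obtain ⟨a, -, ha⟩ := exists_mem_eq_sup univ univ_nonempty fun j => (x j : ℕ)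
  exact ⟨a, ha.symm⟩

noncomputable def toBinary (x : Fin N → Fin (k + 1)) : Fin N → Fin (k + 1) :=
  fun j => if x j = 0 then 0 else 1

lemma val_one_of_one_le (hk : 1 ≤ k) : ((1 : Fin (k + 1)) : ℕ) = 1 := by
  rw [Fin.val_one', Nat.mod_eq_of_lt (by omega)]

lemma rset_toBinary_zero (hk : 1 ≤ k) (x : Fin N → Fin (k + 1)) :
    rset (toBinary x) 0 = rset x 0 := by
  ext j
  simp only [mem_rset, toBinary]
  split_ifs with h
  · simp [h]
  · rw [val_one_of_one_le hk]
    exact iff_of_false one_ne_zero (by rwa [Fin.val_eq_zero_iff])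

lemma val_toBinary_le_one (hk : 1 ≤ k) (x : Fin N → Fin (k + 1)) (j : Fin N) :
    (toBinary x j : ℕ) ≤ 1 := by
  simp only [toBinary]
  split_ifs
  · simp
  · rw [val_one_of_one_le hk]

lemma ple_toBinary (hk : 1 ≤ k) (x : Fin N → Fin (k + 1)) : ple (toBinary x) x := by
  by_cases hx : ∀ j, (x j : ℕ) ≤ 1
  · refine Or.inl (funext fun j => ?_)
    simp only [toBinary]
    split_ifs with h
    · exact h.symm
    · have := hx j
      have := Fin.val_ne_zero_iff.2 h
      exact Fin.ext (by rw [val_one_of_one_le hk]; omega)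
  · push Not at hx
    obtain ⟨j, hj⟩ := hx
    have : Nonempty (Fin N) := ⟨j⟩
    obtain ⟨a, ha⟩ := exists_val_eq_mval x
    refine Or.inr <|
      plt_of_forall_lt (by rw [rset_toBinary_zero hk]) (fun i => ?_) (val_le_mval x) ha
    have := val_toBinary_le_one hk x i
    have := val_le_mval x j
    omega

end Peak

lemma mem_dShadow {k N : ℕ} {A : Finset (Fin N → Fin (k + 1))} {w : Fin N → Fin (k + 1)} :
    w ∈ dShadow A ↔ ∃ x ∈ A, ∃ i, x i ≠ 0 ∧ Function.update x i 0 = w := by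
  simp [dShadow]

lemma update_toBinary_mem {k n : ℕ} (hk : 1 ≤ k) {A : Finset (Fin (n + 1) → Fin (k + 1))}
    (hA : IsCompressed A) {p : Fin (n + 1) → Fin (k + 1)} (hp : p ∈ A) (a : Fin (n + 1)) :
    Function.update (toBinary p) a (p a) ∈ A :=
  mem_of_isCompressed hA hp a (Function.update_self ..) (by
    rw [Fin.removeNth_update]
    exact ple_toBinary hk _)

lemma mem_dShadow_of_peak {k n : ℕ} (hk : 1 ≤ k) {A : Finset (Fin (n + 1) → Fin (k + 1))}
    (hA : IsCompressed A) {P : Fin (n + 1) → Fin (k + 1)} (hP : P ∈ A) {a : Fin (n + 1)}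
    (ha : 2 ≤ (P a : ℕ)) (hbin : ∀ j ≠ a, (P j : ℕ) ≤ 1) (hr : 1 ≤ #(rset P 0))
    {w : Fin (n + 1) → Fin (k + 1)} (hw : ∀ j, (w j : ℕ) < P a)
    (hwcard : #(rset w 0) = #(rset P 0) + 1) : w ∈ dShadow A := by
  have hone : ((1 : Fin (k + 1)) : ℕ) = 1 := val_one_of_one_le hk
  have htwo : 1 < #(rset w 0) := by omega
  obtain ⟨c, hcw, hca⟩ := exists_mem_ne htwo a
  have hraise : ∀ z ∈ rset w 0, Function.update w z 1 c = P c → w ∈ dShadow A := by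
    intro z hz hc
    have hy : Function.update w z 1 ∈ A := by
      refine mem_of_isCompressed_of_forall_lt hA hP hc ?_ (fun j => ?_) (fun j => ?_) hca.symm rfl
      · rw [rset_update_of_ne (by omega), card_erase_of_mem hz, hwcard, Nat.add_sub_cancel]
      · rw [Function.update_apply]
        split_ifs
        · omega
        · exact hw j
      · by_cases hj : j = a
        · rw [hj]
        · have := hbin j hj
          omega
    refine mem_dShadow.2 ⟨_, hy, z, by
      rw [Function.update_self]
      exact Fin.ne_of_val_ne (by rw [hone]; simp), ?_⟩
    rw [Function.update_idem, Function.update_eq_self_iff]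
    exact Fin.ext (mem_rset.1 hz).symm
  by_cases hPc : (P c : ℕ) = 0
  · obtain ⟨z, hz, hzc⟩ := exists_mem_ne htwo c
    refine hraise z hz ?_
    rw [Function.update_of_ne hzc.symm]
    exact Fin.ext ((mem_rset.1 hcw).trans hPc.symm)
  · refine hraise c hcw ?_
    rw [Function.update_self]
    exact Fin.ext (by have := hbin c hca; omega)

theorem claim6_first_general (k n r s : ℕ) (hk : 1 ≤ k) (hr1 : 1 ≤ r)
    (A : Finset (Fin (n + 1) → Fin (k + 1))) (hA : IsCompressed A)
    (hs1 : ∃ x ∈ A ∩ Bexact k (n + 1) r, mval x = s) :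
    dShadow (box k (n + 1) s ∩ Bexact k (n + 1) r) ⊆ dShadow A := by
  obtain ⟨p, hp, rfl⟩ := hs1
  simp only [mem_inter, Bexact, mem_filter, mem_univ, true_and] at hp
  obtain ⟨a, ha⟩ := exists_val_eq_mval p
  intro w hw
  obtain ⟨x, hx, i, hxi, rfl⟩ := mem_dShadow.1 hw
  simp only [mem_inter, _root_.box, Bexact, mem_filter, mem_univ, true_and] at hx
  have hxi : 1 ≤ (x i : ℕ) := Nat.one_le_iff_ne_zero.2 (Fin.val_ne_zero_iff.2 hxi)
  have hpa : 2 ≤ (p a : ℕ) := by have := hx.1 i; omega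
  have hzeros : rset (Function.update (toBinary p) a (p a)) 0 = rset p 0 := by
    rw [rset_update_of_ne (by omega), rset_toBinary_zero hk,
      erase_eq_of_notMem (by rw [mem_rset]; omega)]
  refine mem_dShadow_of_peak hk hA (update_toBinary_mem hk hA hp.1 a) (a := a)
    (by rwa [Function.update_self]) (fun j hj => ?_) (by rwa [hzeros, hp.2]) (fun j => ?_) ?_
  · rw [Function.update_of_ne hj]
    exact val_toBinary_le_one hk p j
  · rw [Function.update_self, ha, Function.update_apply]
    split_ifs
    · simp only [Fin.val_zero]; omega
    · exact hx.1 j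
  · rw [hzeros, hp.2, rset_update_of_eq (by simp),
      card_insert_of_notMem (by rw [mem_rset]; omega), hx.2]

/-- **Claim 6, first part.** Let `k ≥ 2`, `n ≥ 3`, `1 ≤ r ≤ n − 2`, and let
`A ⊆ [k]^n` be compressed with `B_{≥ r+1} ⊆ A ⊆ B_{≥ r}` and `D = A ∩ B_r` nonempty.
If `s = max {m(x) : x ∈ D}` then `d([s]^n ∩ B_r) ⊆ d(A)`.
(Dimension `n ≥ 3` is rendered as `n + 1` with `n ≥ 2`, so `r + 1 ≤ n`;
alphabet `[k]` with `k ≥ 2` as `Fin (k+1)` with `k ≥ 1`.) -/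
theorem claim6_first (k n r s : ℕ) (hk : 1 ≤ k) (hn : 2 ≤ n) (hr1 : 1 ≤ r) (hr2 : r + 1 ≤ n)
    (A : Finset (Fin (n + 1) → Fin (k + 1))) (hA : IsCompressed A)
    (hlow : Bge k (n + 1) (r + 1) ⊆ A) (hhigh : A ⊆ Bge k (n + 1) r)
    (hD : (A ∩ Bexact k (n + 1) r).Nonempty)
    (hs1 : ∃ x ∈ A ∩ Bexact k (n + 1) r, mval x = s)
    (hs2 : ∀ x ∈ A ∩ Bexact k (n + 1) r, mval x ≤ s) :
    dShadow (box k (n + 1) s ∩ Bexact k (n + 1) r) ⊆ dShadow A :=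
  claim6_first_general k n r s hk hr1 A hA hs1
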